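/- Let ω₁ ∈ ℂ∖{0}, η₁ ∈ ℂ, h ∈ ℂ, and set γ = 2ω₁h. Define v(z) = exp(η₁(−2zγ+γ²)/(2ω₁)) · θ₁((z−γ)/(2ω₁)|τ) / θ₁(z/(2ω₁)|τ) and, for g : ℂ² → ℂ, the van Diejen operator (H̄₁g)(x₁,x₂) = Σ_{ε∈{1,−1}} v(εx₁+x₂)·v(εx₁−x₂)·g(x₁+εγ, x₂) + Σ_{ε∈{1,−1}} v(εx₂+x₁)·v(εx₂−x₁)·g(x₁, x₂+εγ). Then for every g : ℂ² → ℂ, with f(λ₁,λ₂) := exp(−4ω₁η₁(λ₁²+λ₂²)) · g(2ω₁λ₁, 2ω₁λ₂), and every (x₁,x₂) ∈ ℂ² at which all theta denominators occurring are nonzero: exp(η₁(x₁²+x₂²)/ω₁) · (M̃₁f)(x₁/(2ω₁), x₂/(2ω₁)) = exp(−2η₁γ²/ω₁) · (H̄₁g)(x₁,x₂). In other words, under the gauge transformation φ(f)(x₁,x₂) = exp(η₁(x₁²+x₂²)/ω₁) f(x₁/2ω₁, x₂/2ω₁), the operator M̃₁ is conjugate to the van Diejen operator H̄₁ up to the constant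 exp(−2η₁γ²/ω₁). -/

import Mathlib

open Complex

/-- The Jacobi theta function θ₁(z|τ). -/
noncomputable def th1 (τ z : ℂ) : ℂ :=
  ∑' k : ℤ, exp (2 * (Real.pi : ℂ) * I *
    ((z + 1/2) * ((k : ℂ) + 1/2) + ((k : ℂ) + 1/2)^2 * τ / 2))

/-- The difference operator `M̃₁` of type `C₂`. -/
noncomputable def M1t (τ h : ℂ) (f : ℂ × ℂ → ℂ) (l : ℂ × ℂ) : ℂ :=
  th1 τ (l.1 + l.2 - h) * th1 τ (l.1 - l.2 - h)
      / (th1 τ (l.1 + l.2) * th1 τ (l.1 - l.2)) * f (l.1 + h, l.2)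
  + th1 τ (l.1 + l.2 + h) * th1 τ (l.1 - l.2 + h)
      / (th1 τ (l.1 + l.2) * th1 τ (l.1 - l.2)) * f (l.1 - h, l.2)
  + th1 τ (l.1 + l.2 - h) * th1 τ (l.1 - l.2 + h)
      / (th1 τ (l.1 + l.2) * th1 τ (l.1 - l.2)) * f (l.1, l.2 + h)
  + th1 τ (l.1 + l.2 + h) * th1 τ (l.1 - l.2 - h)
      / (th1 τ (l.1 + l.2) * th1 τ (l.1 - l.2)) * f (l.1, l.2 - h)

/-- The coefficient function `v(z) = σ(z−γ)/σ(z)` of van Diejen's operator,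
expressed through `θ₁`. -/
noncomputable def vD (τ ω₁ η₁ γ z : ℂ) : ℂ :=
  exp (η₁ * (-(2 * z * γ) + γ^2) / (2 * ω₁))
    * th1 τ ((z - γ) / (2 * ω₁)) / th1 τ (z / (2 * ω₁))

/-- Van Diejen's first difference operator `H̄₁` (with the special parameters
`μ = −γ`, `μ_r = μ_r′ = 0`). -/
noncomputable def H1bar (τ ω₁ η₁ γ : ℂ) (g : ℂ × ℂ → ℂ) (x : ℂ × ℂ) : ℂ :=
  (∑ ε ∈ ({1, -1} : Finset ℤ),
    vD τ ω₁ η₁ γ ((ε : ℂ) * x.1 + x.2) * vD τ ω₁ η₁ γ ((ε : ℂ) * x.1 - x.2)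
      * g (x.1 + (ε : ℂ) * γ, x.2))
  + (∑ ε ∈ ({1, -1} : Finset ℤ),
    vD τ ω₁ η₁ γ ((ε : ℂ) * x.2 + x.1) * vD τ ω₁ η₁ γ ((ε : ℂ) * x.2 - x.1)
      * g (x.1, x.2 + (ε : ℂ) * γ))

/-!
With `γ = 2ω₁h`, the coefficient `v(z)` is `exp(η₁(γ² - 2zγ)/(2ω₁))` times
`θ₁(z/(2ω₁) - h)/θ₁(z/(2ω₁))`; since `θ₁` is odd, each product of two `v`'s in `H̄₁` is the
matching theta coefficient of `M̃₁` times two exponentials. On the other side the gauge contributes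
`exp(η₁(|x|² - |x ± γeᵢ|²)/ω₁)`, which agrees with that pair of exponentials up to the factor
`exp(-2η₁γ²/ω₁)`, independent of `x` and of the term.
-/

theorem th1_neg (τ z : ℂ) : th1 τ (-z) = -th1 τ z := by
  rw [th1, th1, ← tsum_neg, ← ((Equiv.neg ℤ).trans (Equiv.subRight 1)).tsum_eq]
  refine tsum_congr fun k => ?_
  simp only [Equiv.trans_apply, Equiv.neg_apply, Equiv.subRight_apply]
  -- `k ↦ -k - 1` preserves `(k + 1/2)²` and shifts the exponent by an odd multiple of `πi`
  rw [show 2 * (Real.pi : ℂ) * I *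
        ((-z + 1/2) * (((-k - 1 : ℤ) : ℂ) + 1/2) + (((-k - 1 : ℤ) : ℂ) + 1/2)^2 * τ / 2)
      = 2 * (Real.pi : ℂ) * I * ((z + 1/2) * ((k : ℂ) + 1/2) + ((k : ℂ) + 1/2)^2 * τ / 2)
        + (((-k - 1 : ℤ) : ℂ) * (2 * Real.pi * I) + Real.pi * I) by push_cast; ring,
    exp_add, exp_add, exp_int_mul_two_pi_mul_I, exp_pi_mul_I]
  ring

theorem exp_gauge_ratio (η₁ ω₁ γ x₁ x₂ y₁ y₂ p q : ℂ)
    (hy : y₁^2 + y₂^2 = x₁^2 + x₂^2 + γ * (p + q) + γ^2) :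
    exp (η₁ * (x₁^2 + x₂^2) / ω₁) * exp (-(η₁ * (y₁^2 + y₂^2) / ω₁))
      = exp (-(2 * η₁ * γ^2 / ω₁)) * (exp (η₁ * (-(2 * p * γ) + γ^2) / (2 * ω₁))
          * exp (η₁ * (-(2 * q * γ) + γ^2) / (2 * ω₁))) := by
  simp only [← exp_add]
  congr 1
  rw [hy]
  ring

section VanDiejen

variable {τ ω₁ η₁ h γ : ℂ}

theorem H1bar_apply (g : ℂ × ℂ → ℂ) (a b : ℂ) :
    H1bar τ ω₁ η₁ γ g (a, b) =
      vD τ ω₁ η₁ γ (a + b) * vD τ ω₁ η₁ γ (a - b) * g (a + γ, b)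
      + vD τ ω₁ η₁ γ (-(a - b)) * vD τ ω₁ η₁ γ (-(a + b)) * g (a - γ, b)
      + vD τ ω₁ η₁ γ (a + b) * vD τ ω₁ η₁ γ (-(a - b)) * g (a, b + γ)
      + vD τ ω₁ η₁ γ (a - b) * vD τ ω₁ η₁ γ (-(a + b)) * g (a, b - γ) := by
  simp only [H1bar, Finset.sum_pair (show (1 : ℤ) ≠ -1 by decide), Int.cast_one, Int.cast_neg,
    one_mul, neg_one_mul, ← sub_eq_add_neg]
  rw [show -a + b = -(a - b) by ring, show -a - b = -(a + b) by ring, add_comm b a,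
    show b - a = -(a - b) by ring, show -b + a = a - b by ring, show -b - a = -(a + b) by ring]
  ring

theorem vD_eq_exp_mul_th1_div (hω₁ : ω₁ ≠ 0) (hγ : γ = 2 * ω₁ * h) (z : ℂ) :
    vD τ ω₁ η₁ γ z = exp (η₁ * (-(2 * z * γ) + γ^2) / (2 * ω₁))
      * (th1 τ (z / (2 * ω₁) - h) / th1 τ (z / (2 * ω₁))) := by
  rw [vD, mul_div_assoc, sub_div, hγ, mul_div_cancel_left₀ _ (mul_ne_zero two_ne_zero hω₁)]

theorem vD_neg_eq_exp_mul_th1_div (hω₁ : ω₁ ≠ 0) (hγ : γ = 2 * ω₁ * h) (z : ℂ) :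
    vD τ ω₁ η₁ γ (-z) = exp (η₁ * (-(2 * -z * γ) + γ^2) / (2 * ω₁))
      * (th1 τ (z / (2 * ω₁) + h) / th1 τ (z / (2 * ω₁))) := by
  rw [vD_eq_exp_mul_th1_div hω₁ hγ, neg_div, ← neg_add', th1_neg, th1_neg, neg_div_neg_eq]

theorem div_two_mul_add_eq (hω₁ : ω₁ ≠ 0) (hγ : γ = 2 * ω₁ * h) (a : ℂ) :
    a / (2 * ω₁) + h = (a + γ) / (2 * ω₁) := by
  rw [add_div, hγ, mul_div_cancel_left₀ _ (mul_ne_zero two_ne_zero hω₁)]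

theorem div_two_mul_sub_eq (hω₁ : ω₁ ≠ 0) (hγ : γ = 2 * ω₁ * h) (a : ℂ) :
    a / (2 * ω₁) - h = (a - γ) / (2 * ω₁) := by
  rw [sub_div, hγ, mul_div_cancel_left₀ _ (mul_ne_zero two_ne_zero hω₁)]

theorem gauge_apply_div (hω₁ : ω₁ ≠ 0) (g : ℂ × ℂ → ℂ) (y₁ y₂ : ℂ) :
    exp (-(4 * ω₁ * η₁ * ((y₁ / (2 * ω₁))^2 + (y₂ / (2 * ω₁))^2)))
        * g (2 * ω₁ * (y₁ / (2 * ω₁)), 2 * ω₁ * (y₂ / (2 * ω₁)))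
      = exp (-(η₁ * (y₁^2 + y₂^2) / ω₁)) * g (y₁, y₂) := by
  have h2ω₁ : 2 * ω₁ ≠ 0 := mul_ne_zero two_ne_zero hω₁
  rw [mul_div_cancel₀ _ h2ω₁, mul_div_cancel₀ _ h2ω₁]
  congr 2
  field_simp
  ring

end VanDiejen

theorem stmt_9_general (τ : ℂ) (ω₁ : ℂ) (hω₁ : ω₁ ≠ 0) (η₁ h γ : ℂ)
    (hγ : γ = 2 * ω₁ * h) (g : ℂ × ℂ → ℂ) (x : ℂ × ℂ) :
    exp (η₁ * (x.1^2 + x.2^2) / ω₁)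
        * M1t τ h (fun p => exp (-(4 * ω₁ * η₁ * (p.1^2 + p.2^2)))
            * g (2 * ω₁ * p.1, 2 * ω₁ * p.2)) (x.1 / (2 * ω₁), x.2 / (2 * ω₁))
      = exp (-(2 * η₁ * γ^2 / ω₁)) * H1bar τ ω₁ η₁ γ g x := by
  obtain ⟨a, b⟩ := x
  simp only [M1t, div_two_mul_add_eq hω₁ hγ, div_two_mul_sub_eq hω₁ hγ, gauge_apply_div hω₁]
  rw [H1bar_apply]
  simp only [vD_neg_eq_exp_mul_th1_div hω₁ hγ]
  simp only [vD_eq_exp_mul_th1_div hω₁ hγ, add_div, sub_div]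
  set s := a / (2 * ω₁) + b / (2 * ω₁)
  set d := a / (2 * ω₁) - b / (2 * ω₁)
  linear_combination
    th1 τ (s - h) * th1 τ (d - h) / (th1 τ s * th1 τ d) * g (a + γ, b)
      * exp_gauge_ratio η₁ ω₁ γ a b (a + γ) b (a + b) (a - b) (by ring)
    + th1 τ (s + h) * th1 τ (d + h) / (th1 τ s * th1 τ d) * g (a - γ, b)
      * exp_gauge_ratio η₁ ω₁ γ a b (a - γ) b (-(a - b)) (-(a + b)) (by ring)
    + th1 τ (s - h) * th1 τ (d + h) / (th1 τ s * th1 τ d) * g (a, b + γ)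
      * exp_gauge_ratio η₁ ω₁ γ a b a (b + γ) (a + b) (-(a - b)) (by ring)
    + th1 τ (s + h) * th1 τ (d - h) / (th1 τ s * th1 τ d) * g (a, b - γ)
      * exp_gauge_ratio η₁ ω₁ γ a b a (b - γ) (a - b) (-(a + b)) (by ring)

/-- Theorem 3 ("connect"), first identity: under the gauge transformation
`φ(f)(x) = exp(η₁(x₁²+x₂²)/ω₁) f(x/2ω₁)`, the operator `M̃₁` is conjugate to
van Diejen's operator `H̄₁`, up to the constant `exp(−2η₁γ²/ω₁)`. -/
theorem stmt_9 (τ : ℂ) (hτ : 0 < τ.im) (ω₁ : ℂ) (hω₁ : ω₁ ≠ 0) (η₁ h γ : ℂ)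
    (hγ : γ = 2 * ω₁ * h) (g : ℂ × ℂ → ℂ) (x : ℂ × ℂ)
    (hden : ∀ ε ∈ ({1, -1} : Finset ℤ), ∀ ε' ∈ ({1, -1} : Finset ℤ),
      th1 τ (((ε : ℂ) * x.1 + (ε' : ℂ) * x.2) / (2 * ω₁)) ≠ 0) :
    exp (η₁ * (x.1^2 + x.2^2) / ω₁)
        * M1t τ h (fun p => exp (-(4 * ω₁ * η₁ * (p.1^2 + p.2^2)))
            * g (2 * ω₁ * p.1, 2 * ω₁ * p.2)) (x.1 / (2 * ω₁), x.2 / (2 * ω₁))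
      = exp (-(2 * η₁ * γ^2 / ω₁)) * H1bar τ ω₁ η₁ γ g x :=
  stmt_9_general τ ω₁ hω₁ η₁ h γ hγ g x
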